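/- arXiv:2312.12215 — 2 statements merged into one kernel-verified Lean document; each statement's English description precedes it below -/
import Mathlib

section
/- Let n ≥ 3 and let F be an arbitrary field. Then the F-vector space of inner derivations of the dihedral group algebra F D_{2n} has dimension 3⌊(n−1)/2⌋ over F. -/
open MonoidAlgebra

/-- The `F`-linear map sending `β ∈ FG` to the inner derivation
`d_β : α ↦ α * β - β * α` of the group algebra `FG`. -/
noncomputable def innerDerivMap (F G : Type*) [Field F] [Group G] :
    MonoidAlgebra F G →ₗ[F] Module.End F (MonoidAlgebra F G) where
  toFun β :=
    { toFun := fun α => α * β - β * α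
      map_add' := by intro x y; noncomm_ring
      map_smul' := by intro c x; simp [smul_mul_assoc, mul_smul_comm, smul_sub] }
  map_add' := by
    intro β γ; refine LinearMap.ext fun α => ?_
    simp only [LinearMap.coe_mk, AddHom.coe_mk, LinearMap.add_apply]
    noncomm_ring
  map_smul' := by
    intro c β; refine LinearMap.ext fun α => ?_
    simp [smul_mul_assoc, mul_smul_comm, smul_sub]

/-! The kernel of `β ↦ d_β` is the centre of `F G`, whose elements are exactly the class
functions, so by rank–nullity the inner derivations have dimension `|G| - k(G)`, where `k(G)` is
the number of conjugacy classes. Since `G` has `|G| · k(G)` commuting pairs, and in `D_{2n}` these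
are counted through the `gcd(n, 2)` rotations of order dividing two, `2 k(D_{2n}) = n + 3 gcd(n, 2)`;
hence `2n - k(D_{2n}) = 3⌊(n - 1)/2⌋`. -/

lemma ConjClasses.mem_range_funLeft_mk_iff {R M G : Type*} [Semiring R] [AddCommMonoid M]
    [Module R M] [Monoid G] {f : G → M} :
    f ∈ LinearMap.range (LinearMap.funLeft R M (ConjClasses.mk : G → ConjClasses G)) ↔
      ∀ x y, IsConj x y → f x = f y := by
  constructor
  · rintro ⟨f, rfl⟩ x y hxy
    simp [LinearMap.funLeft_apply, ConjClasses.mk_eq_mk_iff_isConj.mpr hxy]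
  · intro hf
    refine ⟨f ∘ Function.surjInv ConjClasses.mk_surjective, funext fun x => hf _ _ ?_⟩
    exact ConjClasses.mk_eq_mk_iff_isConj.mp (Function.surjInv_eq _ _)

namespace MonoidAlgebra

variable {F G : Type*} [Field F] [Group G]

lemma commute_of_iff {g : G} {β : MonoidAlgebra F G} :
    Commute (of F G g) β ↔ ∀ x, β.coeff (g * x * g⁻¹) = β.coeff x := by
  rw [commute_iff_eq, of_apply, ← coeff_inj]
  constructor
  · intro h x
    simpa [mul_assoc] using (DFunLike.congr_fun h (g * x)).symm
  · intro h
    ext y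
    simpa [mul_assoc] using (h (g⁻¹ * y)).symm

lemma mem_ker_innerDerivMap_iff {β : MonoidAlgebra F G} :
    β ∈ LinearMap.ker (innerDerivMap F G) ↔ ∀ x y : G, IsConj x y → β.coeff x = β.coeff y := by
  have hcentral : β ∈ LinearMap.ker (innerDerivMap F G) ↔ ∀ g, Commute (of F G g) β := by
    refine ⟨fun h g => sub_eq_zero.mp (LinearMap.congr_fun h (of F G g)), fun h => ?_⟩
    refine LinearMap.ext fun α => sub_eq_zero.mpr (show Commute α β from ?_)
    induction α using MonoidAlgebra.induction_on with
    | of g => exact h g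
    | add _ _ h₁ h₂ => exact h₁.add_left h₂
    | smul r _ hα => exact hα.smul_left r
  simp_rw [hcentral, commute_of_iff, isConj_iff]
  exact ⟨fun h x _ ⟨g, hg⟩ => hg ▸ (h g x).symm, fun h g x => (h x _ ⟨g, rfl⟩).symm⟩

variable [Finite G]

lemma finrank_ker_innerDerivMap :
    Module.finrank F (LinearMap.ker (innerDerivMap F G)) = Nat.card (ConjClasses G) := by
  have := Fintype.ofFinite G
  have := Fintype.ofFinite (ConjClasses G)
  let e : MonoidAlgebra F G ≃ₗ[F] (G → F) :=
    (coeffLinearEquiv F).trans (Finsupp.linearEquivFunOnFinite F F G)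
  have hclassFun : (LinearMap.ker (innerDerivMap F G)).map e.toLinearMap =
      LinearMap.range (LinearMap.funLeft F F ConjClasses.mk) := by
    ext f
    rw [Submodule.mem_map_equiv, mem_ker_innerDerivMap_iff, ConjClasses.mem_range_funLeft_mk_iff]
    rfl
  rw [← e.finrank_map_eq, hclassFun, LinearMap.finrank_range_of_inj
    (LinearMap.funLeft_injective_of_surjective _ _ _ ConjClasses.mk_surjective),
    Module.finrank_fintype_fun_eq_card, Nat.card_eq_fintype_card]

lemma finrank_range_innerDerivMap :
    Module.finrank F (LinearMap.range (innerDerivMap F G)) =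
      Nat.card G - Nat.card (ConjClasses G) := by
  rw [← finrank_ker_innerDerivMap (F := F), ← Module.finrank_eq_nat_card_basis (basis G F),
    ← LinearMap.finrank_range_add_finrank_ker (innerDerivMap F G), Nat.add_sub_cancel]

end MonoidAlgebra

lemma ZMod.card_add_self_eq_zero (n : ℕ) [NeZero n] :
    Nat.card {x : ZMod n // x + x = 0} = n.gcd 2 :=
  calc Nat.card {x : ZMod n // x + x = 0}
      _ = Nat.card (nsmulAddMonoidHom 2 : ZMod n →+ ZMod n).ker :=
        Nat.card_congr <| Equiv.subtypeEquivRight fun x => by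
          rw [AddMonoidHom.mem_ker, nsmulAddMonoidHom_apply, two_nsmul]
      _ = n.gcd 2 := by rw [IsAddCyclic.card_nsmulAddMonoidHom_ker, Nat.card_zmod]

namespace DihedralGroup

variable {n : ℕ} {i j : ZMod n}

lemma commute_r_sr_iff : Commute (r i) (sr j) ↔ i + i = 0 := by
  rw [commute_iff_eq, r_mul_sr, sr_mul_r, sr.injEq]
  constructor <;> intro h <;> linear_combination -h

lemma commute_sr_r_iff : Commute (sr i) (r j) ↔ j + j = 0 :=
  Commute.symm_iff.trans commute_r_sr_iff

lemma commute_sr_sr_iff : Commute (sr i) (sr j) ↔ (j - i) + (j - i) = 0 := by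
  rw [commute_iff_eq, sr_mul_sr, sr_mul_sr, r.injEq]
  constructor <;> intro h <;> linear_combination h

lemma commute_r_r : Commute (r i) (r j) := by
  rw [commute_iff_eq, r_mul_r, r_mul_r, add_comm]

variable (n) in
def commuteEquiv : {p : DihedralGroup n × DihedralGroup n // Commute p.1 p.2} ≃
    ZMod n × {x : ZMod n // x + x = 0} ⊕ ZMod n × {x : ZMod n // x + x = 0} ⊕
      ZMod n × {x : ZMod n // x + x = 0} ⊕ ZMod n × ZMod n where
  toFun
    | ⟨(sr i, r j), h⟩ => .inl (i, ⟨j, commute_sr_r_iff.mp h⟩)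
    | ⟨(r i, sr j), h⟩ => .inr (.inl (j, ⟨i, commute_r_sr_iff.mp h⟩))
    | ⟨(sr i, sr j), h⟩ => .inr (.inr (.inl (i, ⟨j - i, commute_sr_sr_iff.mp h⟩)))
    | ⟨(r i, r j), _⟩ => .inr (.inr (.inr (i, j)))
  invFun
    | .inl (i, ⟨j, hj⟩) => ⟨(sr i, r j), commute_sr_r_iff.mpr hj⟩
    | .inr (.inl (j, ⟨i, hi⟩)) => ⟨(r i, sr j), commute_r_sr_iff.mpr hi⟩
    | .inr (.inr (.inl (i, ⟨k, hk⟩))) =>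
      ⟨(sr i, sr (i + k)), commute_sr_sr_iff.mpr (by rwa [add_sub_cancel_left])⟩
    | .inr (.inr (.inr (i, j))) => ⟨(r i, r j), commute_r_r⟩
  left_inv
    | ⟨(sr _, r _), _⟩ | ⟨(r _, sr _), _⟩ | ⟨(r _, r _), _⟩ => rfl
    | ⟨(sr i, sr j), _⟩ => by simp
  right_inv
    | .inl _ | .inr (.inl _) | .inr (.inr (.inr _)) => rfl
    | .inr (.inr (.inl (i, ⟨k, _⟩))) => by simp

variable [NeZero n]

lemma card_commute :
    Nat.card {p : DihedralGroup n × DihedralGroup n // Commute p.1 p.2} =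
      n * (n + 3 * n.gcd 2) := by
  simp only [Nat.card_congr (commuteEquiv n), Nat.card_sum, Nat.card_prod, Nat.card_zmod,
    ZMod.card_add_self_eq_zero]
  ring

lemma two_mul_card_conjClasses :
    2 * Nat.card (ConjClasses (DihedralGroup n)) = n + 3 * n.gcd 2 := by
  have h := card_comm_eq_card_conjClasses_mul_card (DihedralGroup n)
  rw [card_commute, nat_card] at h
  refine Nat.eq_of_mul_eq_mul_left (NeZero.pos n) ?_
  linarith

end DihedralGroup

/-- For any field `F`, the space of inner derivations of the dihedral group
algebra `F D_{2n}` has dimension `3⌊(n-1)/2⌋`. -/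
theorem finrank_innerDerivations_dihedral (F : Type*) [Field F] (n : ℕ) (hn : 3 ≤ n) :
    Module.finrank F (LinearMap.range (innerDerivMap F (DihedralGroup n))) =
      3 * ((n - 1) / 2) := by
  have : NeZero n := ⟨by omega⟩
  have hclasses := DihedralGroup.two_mul_card_conjClasses (n := n)
  rw [finrank_range_innerDerivMap, DihedralGroup.nat_card]
  rcases Nat.even_or_odd n with heven | hodd
  · rw [Nat.gcd_eq_right (even_iff_two_dvd.mp heven)] at hclasses
    have := Nat.even_iff.mp heven
    omega
  · rw [Nat.Coprime.gcd_eq_one hodd.coprime_two_right] at hclasses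
    have := Nat.odd_iff.mp hodd
    omega
end

section
/- Let n ≥ 2 and let F be a field that is an algebraic extension of its prime field, of characteristic 0 or of odd prime characteristic p with p ∤ n. Then every derivation of the dicyclic group algebra F T_{4n} is inner: for every additive map d : F T_{4n} → F T_{4n} satisfying d(xy) = d(x)y + x d(y) for all x, y, there exists β ∈ F T_{4n} such that d(α) = αβ − βα for all α ∈ F T_{4n}. -/
/-!
Restricted to the central subfield `F`, a derivation `d` of `F[G]` is a derivation of `F` that
vanishes on the prime field `k`. Since `k` is perfect, `F` is separable algebraic over `k`, so
`Ω[F⁄k] = 0` and `d` vanishes on `F`, i.e. `d` is `F`-linear. As `|G| = 4n` is invertible in `F`,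
averaging the cocycle `g ↦ d(g) g⁻¹` over `G` gives `β = -|G|⁻¹ ∑_g d(g) g⁻¹` with
`d(α) = αβ - βα`.
-/

open MonoidAlgebra

namespace Derivation

variable {R K M : Type*} [CommRing R] [Field K] [Algebra R K] [AddCommGroup M] [Module K M]
  [Module R M]

def constants (D : Derivation R K M) : Subfield K where
  carrier := {x | D x = 0}
  mul_mem' ha hb := by simp_all [leibniz]
  one_mem' := D.map_one_eq_zero
  add_mem' ha hb := by simp_all
  zero_mem' := D.map_zero
  neg_mem' ha := by simp_all
  inv_mem' a ha := by simp_all [leibniz_inv]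

def restrictConstants (D : Derivation R K M) (k : Subfield K) (hk : k ≤ D.constants) :
    Derivation k K M where
  toFun := D
  map_add' := D.map_add
  map_smul' c x := by
    change D (c * x) = (c : K) • D x
    rw [leibniz, show D c = 0 from hk c.2, smul_zero, add_zero]
  map_one_eq_zero' := D.map_one_eq_zero
  leibniz' := D.leibniz

theorem apply_eq_zero_of_isSeparable (D : Derivation R K M)
    [Algebra.IsSeparable (⊥ : Subfield K) K] (x : K) : D x = 0 := by
  have := Algebra.FormallyUnramified.of_isSeparable (⊥ : Subfield K) K
  change D.restrictConstants ⊥ bot_le x = 0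
  rw [← liftKaehlerDifferential_comp_D, Subsingleton.elim (KaehlerDifferential.D _ K x) 0,
    map_zero]

end Derivation

instance Subfield.perfectField_bot (F : Type*) [Field F] : PerfectField (⊥ : Subfield F) := by
  rcases CharP.char_is_prime_or_zero F (ringChar F) with hp | h0
  · have := Fact.mk hp
    let := Subfield.fintypeBot F (ringChar F)
    infer_instance
  · have := (CharP.ringChar_zero_iff_CharZero F).mp h0
    infer_instance

section Leibniz

variable {F A : Type*} [Field F] [Ring A] [Algebra F A] {d : A →+ A}

def derivationOfLeibniz (hd : ∀ x y, d (x * y) = d x * y + x * d y) : Derivation ℤ F A :=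
  Derivation.mk' (d.comp (algebraMap F A).toAddMonoidHom).toIntLinearMap fun a b => by
    change d (algebraMap F A (a * b)) = a • d (algebraMap F A b) + b • d (algebraMap F A a)
    rw [Algebra.smul_def, Algebra.smul_def, map_mul, hd, add_comm, Algebra.commutes b]

variable [Algebra.IsAlgebraic (⊥ : Subfield F) F]

theorem map_algebraMap_eq_zero_of_leibniz (hd : ∀ x y, d (x * y) = d x * y + x * d y) (r : F) :
    d (algebraMap F A r) = 0 :=
  (derivationOfLeibniz hd).apply_eq_zero_of_isSeparable r

def linearMapOfLeibniz (hd : ∀ x y, d (x * y) = d x * y + x * d y) : A →ₗ[F] A where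
  __ := d
  map_smul' r x := by
    change d _ = r • d x
    rw [Algebra.smul_def, hd, map_algebraMap_eq_zero_of_leibniz hd, zero_mul, zero_add,
      ← Algebra.smul_def]

end Leibniz

namespace MonoidAlgebra

variable {k G : Type*} [Group G] [Fintype G]

theorem card_nsmul_map_of_eq_sum_mul_sub [Ring k] {D : Type*}
    [FunLike D (MonoidAlgebra k G) (MonoidAlgebra k G)]
    [AddMonoidHomClass D (MonoidAlgebra k G) (MonoidAlgebra k G)] (d : D)
    (hd : ∀ x y, d (x * y) = d x * y + x * d y) (g : G) :
    Fintype.card G • d (of k G g) =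
      (∑ h : G, d (of k G h) * of k G h⁻¹) * of k G g -
        of k G g * ∑ h : G, d (of k G h) * of k G h⁻¹ := by
  have hterm (h : G) : d (of k G (g * h)) * of k G h⁻¹
      = d (of k G g) + of k G g * (d (of k G h) * of k G h⁻¹) := by
    rw [map_mul, hd, add_mul, mul_assoc, ← map_mul, mul_inv_cancel, map_one, mul_one, mul_assoc]
  have hshift : (∑ h : G, d (of k G h) * of k G h⁻¹) * of k G g
      = ∑ h : G, d (of k G (g * h)) * of k G h⁻¹ := by
    rw [Finset.sum_mul]
    refine Fintype.sum_equiv (Equiv.mulLeft g⁻¹) _ _ fun h => ?_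
    rw [Equiv.coe_mulLeft, mul_inv_cancel_left, mul_assoc, ← map_mul, mul_inv_rev, inv_inv]
  rw [hshift, Finset.sum_congr rfl fun h _ => hterm h, Finset.sum_add_distrib, Finset.sum_const,
    Finset.card_univ, ← Finset.mul_sum, add_sub_cancel_right]

theorem exists_eq_mul_sub_mul_of_leibniz [CommRing k] (hG : IsUnit (Fintype.card G : k))
    (d : MonoidAlgebra k G →ₗ[k] MonoidAlgebra k G)
    (hd : ∀ x y, d (x * y) = d x * y + x * d y) :
    ∃ β, ∀ α, d α = α * β - β * α := by
  obtain ⟨β, hβ⟩ : ∃ β, ∀ g : G, d (of k G g) = of k G g * β - β * of k G g := by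
    set S := ∑ h : G, d (of k G h) * of k G h⁻¹
    obtain ⟨c, hc⟩ : ∃ c : k, c * Fintype.card G = 1 := ⟨_, hG.val_inv_mul⟩
    refine ⟨-(c • S), fun g => ?_⟩
    calc d (of k G g) = c • (Fintype.card G • d (of k G g)) := by
          rw [← Nat.cast_smul_eq_nsmul k, smul_smul, hc, one_smul]
      _ = of k G g * -(c • S) - -(c • S) * of k G g := by
          rw [card_nsmul_map_of_eq_sum_mul_sub d hd g, mul_neg, neg_mul, mul_smul_comm,
            smul_mul_assoc, smul_sub, sub_neg_eq_add, neg_add_eq_sub]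
  refine ⟨β, fun α => ?_⟩
  induction α using MonoidAlgebra.induction_on with
  | of g => exact hβ g
  | add x y hx hy => rw [map_add, hx, hy, add_mul, mul_add]; abel
  | smul r x hx => rw [map_smul, hx, smul_sub, smul_mul_assoc, mul_smul_comm]

end MonoidAlgebra

/-- If `F` is an algebraic extension of its prime field (the bottom subfield of `F`)
of characteristic `0` or of odd prime characteristic `p` with `p ∤ n`, then every
derivation of the dicyclic group algebra `F T_{4n}` is inner. -/
theorem derivations_quaternion_inner (F : Type*) [Field F]
    [Algebra.IsAlgebraic (⊥ : Subfield F) F] (n : ℕ) (hn : 2 ≤ n)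
    (hchar : ringChar F = 0 ∨
      (Nat.Prime (ringChar F) ∧ Odd (ringChar F) ∧ ¬ ringChar F ∣ n))
    (d : MonoidAlgebra F (QuaternionGroup n) →+ MonoidAlgebra F (QuaternionGroup n))
    (hd : ∀ x y : MonoidAlgebra F (QuaternionGroup n), d (x * y) = d x * y + x * d y) :
    ∃ β : MonoidAlgebra F (QuaternionGroup n),
      ∀ α : MonoidAlgebra F (QuaternionGroup n), d α = α * β - β * α := by
  have : NeZero n := ⟨by omega⟩
  have hcard : IsUnit (Fintype.card (QuaternionGroup n) : F) := by
    rw [isUnit_iff_ne_zero, QuaternionGroup.card, Ne, CharP.cast_eq_zero_iff F (ringChar F)]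
    rcases hchar with h0 | ⟨-, hodd, hpn⟩
    · rw [h0, zero_dvd_iff]
      omega
    · exact fun h => hpn ((Nat.coprime_two_right.mpr hodd).pow_right 2 |>.dvd_of_dvd_mul_left h)
  exact exists_eq_mul_sub_mul_of_leibniz hcard (linearMapOfLeibniz hd) hd
end
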